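/- arXiv:1709.06337 — 2 statements merged into one kernel-verified Lean document; each statement's English description precedes it below -/
import Mathlib

section
/- Let P be an integer and m a positive integer. For every positive integer n with n > (|V_{2m}(P,−1)| + U_{2m}(P,−1)² + 1)³, if σ₂(n) − n² = V_{2m}(P,−1)·n + U_{2m}(P,−1)² + 1 (as integers), then either there exists an integer k ≥ 0 such that n = U_{2k}(P,−1) · U_{2k+2m}(P,−1) with both U_{2k}(P,−1) and U_{2k+2m}(P,−1) prime, or there exists an integer k with 0 ≤ k < m and m ≠ 2k such that n = U_{2k}(P,−1) · U_{2m−2k}(P,−1) with both U_{2k}(P,−1) and U_{2m−2k}(P,−1) prime. -/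
/-!
Write `n = p q` with `p` the least prime factor of `n`. The size of `n` rules out `q = 1`, `q = p`
and composite `q` (then `q ≥ p²`, and the divisor `q` alone makes `σ₂(n) - n²` too large), so
`p < q` are primes with `p² + q² = V p q + U²`, where `U = U_{2m}`, `V = V_{2m}`.
Since `V² = (P² + 4) U² + 4`, this gives `(2q - V p)² = U² ((P² + 4) p² + 4)`, so
`w = (2q - V p) / U` solves `w² = (P² + 4) p² + 4`. For `P ≥ 1` every nonnegative solution of this
equation is `(U_{2t}, V_{2t})` (descent by the unit `(V₂ + U₂ √(P² + 4)) / 2`), and then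
`2q = V U_{2t} + U V_{2t} = 2 U_{2t+2m}`. Negative `P` reduces to `-P`, since even-index terms
only change sign.
-/

/-- Lucas sequence of the first kind: `U 0 = 0`, `U 1 = 1`,
`U (n+2) = P * U (n+1) - Q * U n`. -/
def lucasU (P Q : ℤ) : ℕ → ℤ
  | 0 => 0
  | 1 => 1
  | n + 2 => P * lucasU P Q (n + 1) - Q * lucasU P Q n

/-- Lucas sequence of the second kind: `V 0 = 2`, `V 1 = P`,
`V (n+2) = P * V (n+1) - Q * V n`. -/
def lucasV (P Q : ℤ) : ℕ → ℤ
  | 0 => 2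
  | 1 => P
  | n + 2 => P * lucasV P Q (n + 1) - Q * lucasV P Q n

section LucasIdentities

variable {P Q : ℤ}

theorem lucasU_add_two (n : ℕ) :
    lucasU P Q (n + 2) = P * lucasU P Q (n + 1) - Q * lucasU P Q n := rfl

theorem lucasV_add_two (n : ℕ) :
    lucasV P Q (n + 2) = P * lucasV P Q (n + 1) - Q * lucasV P Q n := rfl

theorem two_mul_lucasU_succ (n : ℕ) :
    2 * lucasU P Q (n + 1) = P * lucasU P Q n + lucasV P Q n := by
  induction n using Nat.twoStepInduction with
  | zero => simp [lucasU, lucasV]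
  | one => simp [lucasU, lucasV]; ring
  | more n ih₀ ih₁ =>
    rw [lucasU_add_two (n + 1), lucasV_add_two]
    linear_combination (norm := ring_nf)
      P * ih₁ - Q * ih₀ - P * lucasU_add_two (P := P) (Q := Q) n

theorem two_mul_lucasV_succ (n : ℕ) :
    2 * lucasV P Q (n + 1) = P * lucasV P Q n + (P ^ 2 - 4 * Q) * lucasU P Q n := by
  induction n using Nat.twoStepInduction with
  | zero => simp [lucasU, lucasV]; ring
  | one => simp [lucasU, lucasV]; ring
  | more n ih₀ ih₁ =>
    rw [lucasV_add_two (n + 1), lucasU_add_two]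
    linear_combination (norm := ring_nf)
      P * ih₁ - Q * ih₀ - P * lucasV_add_two (P := P) (Q := Q) n

theorem two_mul_lucasU_add (a b : ℕ) :
    2 * lucasU P Q (a + b) = lucasU P Q a * lucasV P Q b + lucasV P Q a * lucasU P Q b := by
  induction b using Nat.twoStepInduction with
  | zero => simp [lucasU, lucasV]; ring
  | one => simp only [lucasU, lucasV]; linear_combination two_mul_lucasU_succ (P := P) (Q := Q) a
  | more b ih₀ ih₁ =>
    rw [← add_assoc, lucasU_add_two, lucasU_add_two, lucasV_add_two]
    linear_combination P * ih₁ - Q * ih₀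

theorem two_mul_lucasV_add (a b : ℕ) :
    2 * lucasV P Q (a + b) =
      lucasV P Q a * lucasV P Q b + (P ^ 2 - 4 * Q) * lucasU P Q a * lucasU P Q b := by
  induction b using Nat.twoStepInduction with
  | zero => simp [lucasU, lucasV]; ring
  | one => simp only [lucasU, lucasV]; linear_combination two_mul_lucasV_succ (P := P) (Q := Q) a
  | more b ih₀ ih₁ =>
    rw [← add_assoc, lucasV_add_two, lucasU_add_two, lucasV_add_two]
    linear_combination P * ih₁ - Q * ih₀

theorem lucasV_sq_sub (n : ℕ) :
    lucasV P Q n ^ 2 - (P ^ 2 - 4 * Q) * lucasU P Q n ^ 2 = 4 * Q ^ n := by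
  induction n with
  | zero => simp [lucasU, lucasV]
  | succ n ih =>
    have hU := two_mul_lucasU_succ (P := P) (Q := Q) n
    have hV := two_mul_lucasV_succ (P := P) (Q := Q) n
    have h4 : 4 * (lucasV P Q (n + 1) ^ 2 - (P ^ 2 - 4 * Q) * lucasU P Q (n + 1) ^ 2) =
        4 * (4 * Q ^ (n + 1)) := by
      linear_combination (2 * lucasV P Q (n + 1) + P * lucasV P Q n +
          (P ^ 2 - 4 * Q) * lucasU P Q n) * hV -
        (P ^ 2 - 4 * Q) * (2 * lucasU P Q (n + 1) + P * lucasU P Q n + lucasV P Q n) * hU +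
        4 * Q * ih
    linarith

theorem lucasU_neg (n : ℕ) : lucasU (-P) Q n = (-1) ^ (n + 1) * lucasU P Q n := by
  induction n using Nat.twoStepInduction with
  | zero => simp [lucasU]
  | one => simp [lucasU]
  | more n ih₀ ih₁ =>
    rw [lucasU_add_two, lucasU_add_two, ih₀, ih₁]; ring

theorem lucasV_neg (n : ℕ) : lucasV (-P) Q n = (-1) ^ n * lucasV P Q n := by
  induction n using Nat.twoStepInduction with
  | zero => simp [lucasV]
  | one => simp [lucasV]
  | more n ih₀ ih₁ =>
    rw [lucasV_add_two, lucasV_add_two, ih₀, ih₁]; ring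

theorem lucasU_neg_of_even {n : ℕ} (hn : Even n) : lucasU (-P) Q n = -lucasU P Q n := by
  rw [lucasU_neg, pow_succ, hn.neg_one_pow, one_mul, neg_one_mul]

theorem lucasV_neg_of_even {n : ℕ} (hn : Even n) : lucasV (-P) Q n = lucasV P Q n := by
  rw [lucasV_neg, hn.neg_one_pow, one_mul]

theorem lucasU_nonneg (hP : 0 ≤ P) (hQ : Q ≤ 0) (n : ℕ) : 0 ≤ lucasU P Q n := by
  induction n using Nat.twoStepInduction with
  | zero => simp [lucasU]
  | one => simp [lucasU]
  | more n ih₀ ih₁ => rw [lucasU_add_two]; nlinarith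

theorem lucasV_nonneg (hP : 0 ≤ P) (hQ : Q ≤ 0) (n : ℕ) : 0 ≤ lucasV P Q n := by
  induction n using Nat.twoStepInduction with
  | zero => simp [lucasV]
  | one => simpa [lucasV]
  | more n ih₀ ih₁ => rw [lucasV_add_two]; nlinarith

end LucasIdentities

section PellEquation

variable {P : ℤ}

theorem lucasV_two_mul_sq (P : ℤ) (m : ℕ) :
    lucasV P (-1) (2 * m) ^ 2 = (P ^ 2 + 4) * lucasU P (-1) (2 * m) ^ 2 + 4 := by
  have h := lucasV_sq_sub (P := P) (Q := -1) (2 * m)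
  rw [pow_mul] at h
  linear_combination h

theorem two_le_lucasV_two_mul (hP : 0 ≤ P) (m : ℕ) : 2 ≤ lucasV P (-1) (2 * m) := by
  nlinarith [lucasV_two_mul_sq P m, lucasV_nonneg hP (by norm_num : (-1 : ℤ) ≤ 0) (2 * m),
    sq_nonneg (P * lucasU P (-1) (2 * m)), sq_nonneg (lucasU P (-1) (2 * m))]

-- `(w' + y' √(P² + 4)) / 2` is `(w + y √(P² + 4)) / 2` divided by the unit
-- `(V₂ + U₂ √(P² + 4)) / 2 = (P² + 2 + P √(P² + 4)) / 2`.
theorem exists_pell_descent (hP : 1 ≤ P) {y w : ℤ} (hy : 0 < y) (hw : 0 ≤ w)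
    (h : w ^ 2 = (P ^ 2 + 4) * y ^ 2 + 4) :
    ∃ y' w', 0 ≤ y' ∧ y' < y ∧ 0 ≤ w' ∧ w' ^ 2 = (P ^ 2 + 4) * y' ^ 2 + 4 ∧
      2 * y = (P ^ 2 + 2) * y' + P * w' ∧ 2 * w = (P ^ 2 + 2) * w' + P * (P ^ 2 + 4) * y' := by
  have hsq : Even ((w - P * y) ^ 2) :=
    ⟨P ^ 2 * y ^ 2 + 2 * y ^ 2 + 2 - P * y * w, by linear_combination h⟩
  obtain ⟨t, ht⟩ := (Int.even_pow.mp hsq).1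
  have hrel : t ^ 2 + P * t * y - y ^ 2 = 1 := by
    have h4 : 4 * (t ^ 2 + P * t * y - y ^ 2) = 4 * 1 := by
      linear_combination h - (w + P * y + 2 * t) * ht
    linarith
  have ht0 : 0 < t := by nlinarith
  have hPt : P * t ≤ y := by nlinarith
  refine ⟨y - P * t, (P ^ 2 + 2) * t - P * y, by linarith, by nlinarith, by nlinarith,
    by linear_combination 4 * hrel, by ring, by linear_combination 2 * ht⟩

theorem exists_eq_lucas_two_mul_of_pell (hP : 1 ≤ P) {y w : ℤ} (hy : 0 ≤ y) (hw : 0 ≤ w)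
    (h : w ^ 2 = (P ^ 2 + 4) * y ^ 2 + 4) :
    ∃ t : ℕ, y = lucasU P (-1) (2 * t) ∧ w = lucasV P (-1) (2 * t) := by
  rcases hy.eq_or_lt with rfl | hy
  · exact ⟨0, rfl, by simp only [lucasV]; nlinarith⟩
  obtain ⟨y', w', hy', hy'y, hw', h', hy2, hw2⟩ := exists_pell_descent hP hy hw h
  obtain ⟨t, rfl, rfl⟩ := exists_eq_lucas_two_mul_of_pell hP hy' hw' h'
  have hU := two_mul_lucasU_add (P := P) (Q := -1) (2 * t) 2
  have hV := two_mul_lucasV_add (P := P) (Q := -1) (2 * t) 2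
  rw [show lucasU P (-1) 2 = P by simp [lucasU]] at hU hV
  rw [show lucasV P (-1) 2 = P ^ 2 + 2 by simp [lucasV]; ring] at hU hV
  exact ⟨t + 1, by rw [mul_add_one]; linarith, by rw [mul_add_one]; linarith⟩
termination_by y.toNat
decreasing_by omega

theorem exists_eq_lucasU_of_sq_add_sq (hP : 0 ≤ P) {m : ℕ} {p s : ℤ} (hp : 0 ≤ p) (hps : p < s)
    (h : p ^ 2 + s ^ 2 = lucasV P (-1) (2 * m) * p * s + lucasU P (-1) (2 * m) ^ 2) :
    ∃ k : ℕ, p = lucasU P (-1) (2 * k) ∧ s = lucasU P (-1) (2 * k + 2 * m) := by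
  have hpell := lucasV_two_mul_sq P m
  have hU : 0 < lucasU P (-1) (2 * m) := by
    refine (lucasU_nonneg hP (by norm_num : (-1 : ℤ) ≤ 0) _).lt_of_ne' fun hU => ?_
    rw [hU] at hpell h
    have hV : lucasV P (-1) (2 * m) = 2 := by nlinarith [two_le_lucasV_two_mul hP m]
    rw [hV] at h
    nlinarith
  have hP1 : 1 ≤ P := by
    refine lt_of_le_of_ne hP fun hP0 => hU.ne' ?_
    subst hP0
    have := lucasU_neg_of_even (P := 0) (Q := -1) (even_two_mul m)
    rw [neg_zero] at this
    linarith
  set V := lucasV P (-1) (2 * m)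
  set U := lucasU P (-1) (2 * m)
  have hpos : 0 < 2 * s - V * p := by nlinarith
  have hsq : (2 * s - V * p) ^ 2 = U ^ 2 * ((P ^ 2 + 4) * p ^ 2 + 4) := by
    linear_combination 4 * h + p ^ 2 * hpell
  obtain ⟨w, hw⟩ : U ∣ 2 * s - V * p := (Int.pow_dvd_pow_iff two_ne_zero).mp ⟨_, hsq⟩
  have hw0 : 0 < w := pos_of_mul_pos_right (hw ▸ hpos) hU.le
  have hwp : w ^ 2 = (P ^ 2 + 4) * p ^ 2 + 4 :=
    mul_left_cancel₀ (pow_ne_zero 2 hU.ne') (by rw [← mul_pow, ← hw, hsq])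
  obtain ⟨t, rfl, rfl⟩ := exists_eq_lucas_two_mul_of_pell hP1 hp hw0.le hwp
  have hadd := two_mul_lucasU_add (P := P) (Q := -1) (2 * t) (2 * m)
  exact ⟨t, rfl, by linarith⟩

end PellEquation

namespace ArithmeticFunction

open scoped sigma

theorem sigma_prime {k p : ℕ} (hp : p.Prime) : σ k p = 1 + p ^ k := by
  simpa [Finset.sum_range_succ] using sigma_apply_prime_pow (k := k) (i := 1) hp

theorem sigma_prime_sq {k p : ℕ} (hp : p.Prime) : σ k (p ^ 2) = 1 + p ^ k + p ^ (2 * k) := by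
  simp [sigma_apply_prime_pow hp, Finset.sum_range_succ]

theorem sigma_mul_of_prime_ne {k p q : ℕ} (hp : p.Prime) (hq : q.Prime) (hpq : p ≠ q) :
    σ k (p * q) = (1 + p ^ k) * (1 + q ^ k) := by
  rw [isMultiplicative_sigma.map_mul_of_coprime ((Nat.coprime_primes hp hq).mpr hpq),
    sigma_prime hp, sigma_prime hq]

theorem one_add_pow_add_pow_le_sigma {k n d : ℕ} (hd : d ∣ n) (h1 : 1 < d) (hdn : d < n) :
    1 + d ^ k + n ^ k ≤ σ k n := by
  have hn : n ≠ 0 := by omega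
  rw [sigma_apply]
  calc 1 + d ^ k + n ^ k = ∑ e ∈ {1, d, n}, e ^ k := by
        rw [Finset.sum_insert (by simp; omega), Finset.sum_pair (by omega), one_pow, add_assoc]
    _ ≤ ∑ e ∈ n.divisors, e ^ k := by
        refine Finset.sum_le_sum_of_subset ?_
        simp [Finset.insert_subset_iff, hd, hn]

end ArithmeticFunction

theorem Nat.minFac_sq_le_of_mul_eq {n q : ℕ} (h : n.minFac * q = n) (hq1 : 1 < q)
    (hq : ¬ q.Prime) : n.minFac ^ 2 ≤ q :=
  calc n.minFac ^ 2 ≤ q.minFac ^ 2 := by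
        refine Nat.pow_le_pow_left (Nat.minFac_le_of_dvd (Nat.minFac_prime hq1.ne').two_le ?_) 2
        exact (Nat.minFac_dvd q).trans (Dvd.intro_left _ h)
    _ ≤ q := Nat.minFac_sq_le_self (by omega) hq

theorem lt_sq_of_pow_three_lt {R : Type*} [CommRing R] [LinearOrder R] [IsStrictOrderedRing R]
    {c n q : R} (hc : 0 ≤ c) (hn : c ^ 3 < n) (hnq : n ^ 2 ≤ q ^ 3) : c * n < q ^ 2 := by
  have hn0 : 0 < n := lt_of_le_of_lt (pow_nonneg hc 3) hn
  refine lt_of_pow_lt_pow_left₀ 3 (by nlinarith [sq_nonneg q, sq_nonneg n]) ?_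
  calc (c * n) ^ 3 = c ^ 3 * n ^ 3 := mul_pow c n 3
    _ < n * n ^ 3 := by gcongr
    _ = (n ^ 2) ^ 2 := by ring
    _ ≤ (q ^ 3) ^ 2 := by gcongr
    _ = (q ^ 2) ^ 3 := by ring

section

open ArithmeticFunction
open scoped ArithmeticFunction.sigma

theorem exists_primes_of_sigma_two_sub_sq {a b : ℤ} {n : ℕ} (ha : 2 ≤ a) (hb : 0 ≤ b)
    (hn : (a + b + 1) ^ 3 < n) (h : (σ 2 n : ℤ) - n ^ 2 = a * n + b + 1) :
    ∃ p q : ℕ, p.Prime ∧ q.Prime ∧ p < q ∧ n = p * q ∧ (p : ℤ) ^ 2 + q ^ 2 = a * p * q + b := by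
  have hn1 : 1 < n := by
    have : (1 : ℤ) < n := lt_of_le_of_lt (one_le_pow₀ (by linarith)) hn
    exact_mod_cast this
  have hp : n.minFac.Prime := Nat.minFac_prime hn1.ne'
  obtain ⟨q, hq⟩ := Nat.minFac_dvd n
  set p := n.minFac
  have hq0 : q ≠ 0 := by rintro rfl; omega
  rcases (Nat.one_le_iff_ne_zero.mpr hq0).eq_or_lt with rfl | hq1
  · rw [mul_one] at hq
    rw [hq, sigma_prime hp] at h
    push_cast at h
    nlinarith
  by_cases hqp : q.Prime
  · rcases eq_or_ne p q with rfl | hpq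
    · rw [hq, ← sq, sigma_prime_sq hp] at h
      push_cast at h
      nlinarith
    refine ⟨p, q, hp, hqp, lt_of_le_of_ne (Nat.minFac_le_of_dvd hqp.two_le ⟨p, ?_⟩) hpq, hq, ?_⟩
    · rw [hq, mul_comm]
    rw [hq, sigma_mul_of_prime_ne hp hqp hpq] at h
    push_cast at h
    linear_combination h
  exfalso
  have hpq : p ^ 2 ≤ q := Nat.minFac_sq_le_of_mul_eq hq.symm hq1 hqp
  have hσ := one_add_pow_add_pow_le_sigma (k := 2) (n := n) ⟨p, by rw [hq, mul_comm]⟩ hq1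
    (by rw [hq]; exact lt_mul_left (by omega) hp.one_lt)
  have hnq : (n : ℤ) ^ 2 ≤ (q : ℤ) ^ 3 := by
    rw [hq]; push_cast
    nlinarith
  have := lt_sq_of_pow_three_lt (by linarith) hn hnq
  zify at hσ
  nlinarith

end

theorem stmt_7_general (P : ℤ) (m : ℕ) (n : ℕ)
    (hbig : (n : ℤ) > (|lucasV P (-1) (2 * m)| + lucasU P (-1) (2 * m) ^ 2 + 1) ^ 3)
    (heq : ((ArithmeticFunction.sigma 2) n : ℤ) - (n : ℤ) ^ 2 =
      lucasV P (-1) (2 * m) * n + lucasU P (-1) (2 * m) ^ 2 + 1) :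
    (∃ k : ℕ,
      (n : ℤ) = lucasU P (-1) (2 * k) * lucasU P (-1) (2 * k + 2 * m) ∧
      Prime (lucasU P (-1) (2 * k)) ∧ Prime (lucasU P (-1) (2 * k + 2 * m))) ∨
    (∃ k : ℕ, k < m ∧ m ≠ 2 * k ∧
      (n : ℤ) = lucasU P (-1) (2 * k) * lucasU P (-1) (2 * m - 2 * k) ∧
      Prime (lucasU P (-1) (2 * k)) ∧ Prime (lucasU P (-1) (2 * m - 2 * k))) := by
  left
  wlog hP : 0 ≤ P generalizing P
  · have hm : Even (2 * m) := even_two_mul m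
    obtain ⟨k, hn, hk, hkm⟩ := this (-P)
      (by rwa [lucasV_neg_of_even hm, lucasU_neg_of_even hm, neg_sq])
      (by rwa [lucasV_neg_of_even hm, lucasU_neg_of_even hm, neg_sq]) (by linarith)
    have hkm' : Even (2 * k + 2 * m) := ⟨k + m, by ring⟩
    simp only [lucasU_neg_of_even (even_two_mul k), lucasU_neg_of_even hkm'] at hn hk hkm
    exact ⟨k, by rw [hn, neg_mul_neg], by simpa using hk.neg, by simpa using hkm.neg⟩
  have hV := two_le_lucasV_two_mul hP m
  rw [abs_of_nonneg (by linarith)] at hbig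
  obtain ⟨p, q, hp, hq, hpq, rfl, hrel⟩ :=
    exists_primes_of_sigma_two_sub_sq hV (sq_nonneg _) hbig heq
  obtain ⟨k, hpk, hqk⟩ :=
    exists_eq_lucasU_of_sq_add_sq hP (Nat.cast_nonneg p) (by exact_mod_cast hpq) hrel
  refine ⟨k, by push_cast; rw [hpk, hqk], ?_, ?_⟩
  · exact hpk ▸ Nat.prime_iff_prime_int.mp hp
  · exact hqk ▸ Nat.prime_iff_prime_int.mp hq

theorem stmt_7 (P : ℤ) (m : ℕ) (hm : 1 ≤ m)
    (n : ℕ) (hn : 0 < n)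
    (hbig : (n : ℤ) > (|lucasV P (-1) (2 * m)| + lucasU P (-1) (2 * m) ^ 2 + 1) ^ 3)
    (heq : ((ArithmeticFunction.sigma 2) n : ℤ) - (n : ℤ) ^ 2 =
      lucasV P (-1) (2 * m) * n + lucasU P (-1) (2 * m) ^ 2 + 1) :
    (∃ k : ℕ,
      (n : ℤ) = lucasU P (-1) (2 * k) * lucasU P (-1) (2 * k + 2 * m) ∧
      Prime (lucasU P (-1) (2 * k)) ∧ Prime (lucasU P (-1) (2 * k + 2 * m))) ∨
    (∃ k : ℕ, k < m ∧ m ≠ 2 * k ∧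
      (n : ℤ) = lucasU P (-1) (2 * k) * lucasU P (-1) (2 * m - 2 * k) ∧
      Prime (lucasU P (-1) (2 * k)) ∧ Prime (lucasU P (-1) (2 * m - 2 * k))) :=
  stmt_7_general P m n hbig heq
end

section
/- Let P be an integer such that P² + 4 is squarefree, and let m be a positive integer. For every positive integer n with n > (|V_{2m}(P,−1)| + |V_{2m}(P,−1)² − 3|)³, if σ₂(n) − n² = V_{2m}(P,−1)·n + V_{2m}(P,−1)² − 3 (as integers), then either there exists an integer k ≥ 0 such that n = V_{2k+1}(P,−1) · V_{2k+2m+1}(P,−1) with both V_{2k+1}(P,−1) and V_{2k+2m+1}(P,−1) prime, or there exists an integer k with 0 ≤ k < m and m ≠ 2k+1 such that n = V_{2k+1}(P,−1) · V_{2m−2k−1}(P,−1) with both V_{2k+1}(P,−1) and V_{2m−2k−1}(P,−1) prime. -/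
section
variable (P : ℤ)
local notation "U" => lucasU P (-1)
local notation "V" => lucasV P (-1)
local notation "D" => P ^ 2 + 4

@[simp] lemma U0 : U 0 = 0 := rfl
@[simp] lemma U1 : U 1 = 1 := rfl
@[simp] lemma V0 : V 0 = 2 := rfl
@[simp] lemma V1 : V 1 = P := rfl
lemma Urec (n : ℕ) : U (n+2) = P * U (n+1) + U n := by
  show P * U (n+1) - (-1) * U n = _; ring
lemma Vrec (n : ℕ) : V (n+2) = P * V (n+1) + V n := by
  show P * V (n+1) - (-1) * V n = _; ring

lemma UV_step : ∀ n : ℕ, 2 * V (n+1) = P * V n + D * U n ∧ 2 * U (n+1) = V n + P * U n := by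
  intro n
  induction n using Nat.strong_induction_on with
  | _ n ih =>
    match n with
    | 0 => constructor <;> simp <;> ring
    | 1 =>
      constructor <;> simp [Vrec, Urec] <;> ring
    | (k+2) =>
      obtain ⟨h1, h2⟩ := ih k (by omega)
      obtain ⟨h3, h4⟩ := ih (k+1) (by omega)
      have r1 := Vrec P (k+1)
      have r1' := Urec P (k+1)
      have r2 := Vrec P k
      have r3 := Urec P k
      constructor
      · linear_combination 2*r1 - (P^2+4)*r3 + P*h3 - P*r2 + h1
      · linear_combination 2*r1' - P*r3 - r2 + h2 + P*h4
lemma Vstep (n : ℕ) : 2 * V (n+1) = P * V n + D * U n := (UV_step P n).1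
lemma Ustep (n : ℕ) : 2 * U (n+1) = V n + P * U n := (UV_step P n).2

lemma norm_eq : ∀ n : ℕ, V n ^ 2 - D * U n ^ 2 = 4 * (-1 : ℤ) ^ n := by
  intro n
  induction n with
  | zero => simp
  | succ k ih =>
    have h1 := Vstep P k
    have h2 := Ustep P k
    have : 4 * (V (k+1) ^ 2 - D * U (k+1) ^ 2) = 4 * (4 * (-1:ℤ) ^ (k+1)) := by
      have : (-1:ℤ)^(k+1) = -(-1)^k := by ring
      rw [this]
      linear_combination (2*V (k+1) + P * V k + D * U k) * h1 - (P^2+4) * (2 * U (k+1) + V k + P * U k) * h2 - 4 * ih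
    linarith

lemma add_VU : ∀ b a : ℕ, 2 * V (a+b) = V a * V b + D * (U a * U b) ∧
    2 * U (a+b) = U a * V b + V a * U b := by
  intro b
  induction b with
  | zero => intro a; constructor <;> simp <;> ring_nf
  | succ k ih =>
    intro a
    obtain ⟨i1, i2⟩ := ih a
    have h1 := Vstep P (a+k)
    have h2 := Ustep P (a+k)
    have h3 := Vstep P k
    have h4 := Ustep P k
    have e1 : a + (k+1) = (a+k) + 1 := by omega
    rw [e1]
    constructor
    · have : 2 * (2 * V (a+k+1)) = 2 * (V a * V (k+1) + D * (U a * U (k+1))) := by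
        linear_combination 2*h1 + P*i1 + (P^2+4)*i2 - V a * h3 - (P^2+4) * U a * h4
      linarith
    · have : 2 * (2 * U (a+k+1)) = 2 * (U a * V (k+1) + V a * U (k+1)) := by
        linear_combination 2*h2 + i1 + P*i2 - U a * h3 - V a * h4
      linarith

lemma add_V (a b : ℕ) : 2 * V (a+b) = V a * V b + D * (U a * U b) := (add_VU P b a).1
lemma add_U (a b : ℕ) : 2 * U (a+b) = U a * V b + V a * U b := (add_VU P b a).2

lemma sub_V (a b : ℕ) : V (a+b) * V b - D * (U (a+b) * U b) = 2 * (-1:ℤ)^b * V a := by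
  have h1 := add_V P a b
  have h2 := add_U P a b
  have h3 := norm_eq P b
  have : 2 * (V (a+b) * V b - D * (U (a+b) * U b)) = 2 * (2 * (-1:ℤ)^b * V a) := by
    linear_combination V b * h1 - (P^2+4) * U b * h2 + V a * h3
  linarith


lemma UV_pos (hP : 1 ≤ P) : ∀ n : ℕ, (0 ≤ U n ∧ 1 ≤ V n) ∧ (1 ≤ n → 1 ≤ U n) := by
  intro n
  induction n using Nat.strong_induction_on with
  | _ n ih =>
    match n with
    | 0 => simp
    | 1 => simp; omega
    | (k+2) =>
      obtain ⟨⟨hu1, hv1⟩, _⟩ := ih k (by omega)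
      obtain ⟨⟨hu2, hv2⟩, hu3⟩ := ih (k+1) (by omega)
      have hu4 : 1 ≤ U (k+1) := hu3 (by omega)
      rw [Urec, Vrec]
      have h1 : 1 ≤ P * U (k+1) := one_le_mul_of_one_le_of_one_le hP hu4
      have h2 : 1 ≤ P * V (k+1) := one_le_mul_of_one_le_of_one_le hP hv2
      exact ⟨⟨by linarith, by linarith⟩, fun _ => by linarith⟩

lemma U_nonneg (hP : 1 ≤ P) (n : ℕ) : 0 ≤ U n := ((UV_pos P hP n).1).1
lemma V_pos (hP : 1 ≤ P) (n : ℕ) : 1 ≤ V n := ((UV_pos P hP n).1).2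
lemma U_pos (hP : 1 ≤ P) (n : ℕ) (h : 1 ≤ n) : 1 ≤ U n := (UV_pos P hP n).2 h

lemma V_succ_lt (hP : 1 ≤ P) (n : ℕ) (h : 1 ≤ n) : V n < V (n+1) := by
  obtain ⟨k, rfl⟩ : ∃ k, n = k + 1 := ⟨n - 1, by omega⟩
  rw [Vrec]
  have h1 : V (k+1) ≤ P * V (k+1) := le_mul_of_one_le_left (by linarith [V_pos P hP (k+1)]) hP
  have := V_pos P hP k
  linarith

lemma V_lt_V (hP : 1 ≤ P) (a b : ℕ) (ha : 1 ≤ a) (hab : a < b) : V a < V b := by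
  induction b with
  | zero => omega
  | succ k ih =>
    rcases Nat.lt_or_ge a k with h | h
    · exact lt_trans (ih h) (V_succ_lt P hP k (by omega))
    · have : a = k := by omega
      subst this
      exact V_succ_lt P hP a ha

lemma pell_solve (hP : 1 ≤ P) : ∀ N : ℕ, ∀ y z : ℤ, 0 < y → 0 ≤ z → z ≤ (N:ℤ) →
    (y^2 - D * z^2 = 4 ∨ y^2 - D * z^2 = -4) → ∃ j, y = V j ∧ z = U j := by
  intro N
  induction N with
  | zero =>
    intro y z hy hz0 hzN hnorm
    have hz : z = 0 := by omega
    subst hz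
    rcases hnorm with h | h
    · refine ⟨0, ?_, by simp⟩
      have h2 : (y - 2) * (y + 2) = 0 := by linear_combination h
      rcases mul_eq_zero.mp h2 with h3 | h3
      · show y = 2; omega
      · omega
    · exfalso; nlinarith
  | succ N ih =>
    intro y z hy hz0 hzN hnorm
    rcases le_or_gt z (N:ℤ) with hle | hgt
    · exact ih y z hy hz0 hle hnorm
    · have hz1 : 1 ≤ z := by
        have : (0:ℤ) ≤ N := Int.natCast_nonneg N
        omega
      -- special base case P = 1, z = 1, norm = +4
      by_cases hspec : P = 1 ∧ z = 1 ∧ y^2 - D * z^2 = 4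
      · obtain ⟨hP1, hz1', hn4⟩ := hspec
        refine ⟨2, ?_, ?_⟩
        · have hy3 : y = 3 := by
            rw [hP1, hz1'] at hn4
            have h2 : (y - 3) * (y + 3) = 0 := by linear_combination hn4
            rcases mul_eq_zero.mp h2 with h3 | h3 <;> omega
          have : V 2 = P * P + 2 := by rw [Vrec]; simp
          rw [hy3, this, hP1]; norm_num
        · have : U 2 = P := by rw [Urec]; simp
          rw [this, hP1, hz1']
      · -- descent
        have hyP : P * z ≤ y := by
          have h1 : (P*z)^2 ≤ y^2 := by rcases hnorm with h | h <;> nlinarith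
          nlinarith [mul_nonneg (by linarith : (0:ℤ) ≤ P) hz0]
        have h2dvd : (2:ℤ) ∣ (y - P*z) := by
          have hprod : (2:ℤ) ∣ (y - P*z) * (y + P*z) := by
            rcases hnorm with h | h
            · exact ⟨2*z^2 + 2, by linear_combination h⟩
            · exact ⟨2*z^2 - 2, by linear_combination h⟩
          rcases (Prime.dvd_or_dvd Int.prime_two hprod) with h | h
          · exact h
          · have : y - P*z = (y + P*z) - 2*(P*z) := by ring
            rw [this]
            exact dvd_sub h ⟨P*z, by ring⟩
        obtain ⟨t, ht⟩ := h2dvd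
        have ht0 : 0 ≤ t := by omega
        have htz : t < z := by
          have hylt : y < (P+2)*z := by
            have h1 : y^2 < ((P+2)*z)^2 := by
              rcases hnorm with h | h
              · -- +4 case: need P*z^2 > 1
                have hPz : 1 < P * z^2 := by
                  rcases lt_or_ge 1 P with hPgt | hPle
                  · nlinarith
                  · have hP1 : P = 1 := by omega
                    have hz2 : 2 ≤ z := by
                      rcases lt_or_ge 1 z with h' | h'
                      · omega
                      · exfalso; exact hspec ⟨hP1, by omega, h⟩
                    nlinarith
                nlinarith
              · nlinarith
            nlinarith [mul_pos (by linarith : (0:ℤ) < P + 2) (by linarith : (0:ℤ) < z)]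
          have hexp : (P+2)*z = P*z + 2*z := by ring
          linarith
        set y' : ℤ := 2*z - P*t with hy'def
        have hy'2 : 2 * y' = D * z - P * y := by
          have : y = P*z + 2*t := by omega
          rw [hy'def, this]; ring
        have hy'pos : 0 < y' := by
          have hz2 : 1 ≤ z^2 := by nlinarith
          have hsq : (P*y)^2 < (D*z)^2 := by
            rcases hnorm with h | h
            · have key : (D*z)^2 - (P*y)^2 = 4*(P^2*(z^2-1) + 4*z^2) := by
                linear_combination (-(P^2) : ℤ) * h
              nlinarith [sq_nonneg P]
            · have key : (D*z)^2 - (P*y)^2 = 4*(D*z^2 + P^2) := by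
                linear_combination (-(P^2) : ℤ) * h
              nlinarith [sq_nonneg P, sq_nonneg z]
          have hPy : 0 ≤ P * y := mul_nonneg (by linarith) (le_of_lt hy)
          have hDz : 0 < D * z := mul_pos (by positivity) (by omega)
          have : P * y < D * z := by nlinarith
          omega
        have hnorm' : y'^2 - D * t^2 = 4 ∨ y'^2 - D * t^2 = -4 := by
          have key : 4 * (y'^2 - D * t^2) = -4 * (y^2 - D * z^2) := by
            have hy2 : 2*t = y - P*z := by omega
            linear_combination (2*y' + D*z - P*y) * hy'2 - (P^2+4) * (2*t + y - P*z) * hy2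
          rcases hnorm with h | h
          · right; rw [h] at key; linarith
          · left; rw [h] at key; linarith
        obtain ⟨j, hj1, hj2⟩ := ih y' t hy'pos ht0 (by omega) hnorm'
        refine ⟨j+1, ?_, ?_⟩
        · have h1 := Vstep P j
          rw [← hj1, ← hj2] at h1
          have h2 : 2 * y = P * y' + D * t := by
            have hy2 : y = P*z + 2*t := by omega
            rw [hy'def, hy2]; ring
          linarith
        · have h1 := Ustep P j
          rw [← hj1, ← hj2] at h1
          have h2 : 2 * z = y' + P * t := by rw [hy'def]; ring
          linarith

lemma V_two : V 2 = P^2 + 2 := by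
  have := Vrec P 0
  simp at this
  rw [show (2:ℕ) = 0 + 2 from rfl, Vrec]
  simp; ring

lemma A_ge_three (hP : 1 ≤ P) (m : ℕ) (hm : 1 ≤ m) : 3 ≤ V (2*m) := by
  have h2 : V 2 = P^2+2 := V_two P
  have hge : P^2 + 2 ≥ 3 := by nlinarith
  rcases Nat.lt_or_ge 2 (2*m) with h | h
  · have := V_lt_V P hP 2 (2*m) (by omega) h
    omega
  · have : 2*m = 2 := by omega
    rw [this, h2]; omega
end

section
open ArithmeticFunction

lemma sigma2_prime (p : ℕ) (hp : p.Prime) : (sigma 2) p = p^2 + 1 := by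
  rw [sigma_apply, hp.divisors]
  rw [Finset.sum_pair hp.one_lt.ne]; ring

lemma sigma2_prime_mul (p q : ℕ) (hp : p.Prime) (hq : q.Prime) (hpq : p ≠ q) :
    (sigma 2) (p*q) = (p^2+1) * (q^2+1) := by
  rw [isMultiplicative_sigma.map_mul_of_coprime ((Nat.coprime_primes hp hq).mpr hpq)]
  rw [sigma_apply, sigma_apply, hp.divisors, hq.divisors]
  rw [Finset.sum_pair hp.one_lt.ne, Finset.sum_pair hq.one_lt.ne]
  ring

lemma sigma2_prime_sq (p : ℕ) (hp : p.Prime) : (sigma 2) (p^2) = p^4 + p^2 + 1 := by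
  rw [sigma_apply, Nat.divisors_prime_pow hp]
  rw [Finset.sum_map]
  simp [Finset.sum_range_succ]
  ring

lemma sigma2_lb (n d : ℕ) (hn : 0 < n) (hd : d ∣ n) (h1 : 1 < d) (h2 : d < n) :
    n^2 + d^2 + 1 ≤ (sigma 2) n := by
  rw [sigma_apply]
  have hsub : ({1, d, n} : Finset ℕ) ⊆ n.divisors := by
    intro x hx
    simp only [Finset.mem_insert, Finset.mem_singleton] at hx
    rcases hx with rfl | rfl | rfl <;> simp [Nat.mem_divisors, hd, hn.ne']
  calc n^2 + d^2 + 1 = ∑ x ∈ ({1, d, n} : Finset ℕ), x^2 := by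
        rw [Finset.sum_insert (by simp; omega), Finset.sum_pair (by omega)]
        ring
    _ ≤ _ := Finset.sum_le_sum_of_subset hsub
end

set_option maxHeartbeats 1000000 in
lemma main_pos (P : ℤ) (hP : 1 ≤ P) (hsf : Squarefree (P ^ 2 + 4)) (m : ℕ) (hm : 1 ≤ m)
    (n : ℕ) (hn : 0 < n)
    (hbig : (n : ℤ) > (|lucasV P (-1) (2 * m)| + |lucasV P (-1) (2 * m) ^ 2 - 3|) ^ 3)
    (heq : ((ArithmeticFunction.sigma 2) n : ℤ) - (n : ℤ) ^ 2 =
      lucasV P (-1) (2 * m) * n + lucasV P (-1) (2 * m) ^ 2 - 3) :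
    ∃ k : ℕ,
      (n : ℤ) = lucasV P (-1) (2 * k + 1) * lucasV P (-1) (2 * k + 2 * m + 1) ∧
      Prime (lucasV P (-1) (2 * k + 1)) ∧ Prime (lucasV P (-1) (2 * k + 2 * m + 1)) := by
  have hA3 : 3 ≤ lucasV P (-1) (2*m) := A_ge_three P hP m hm
  obtain ⟨A, hAdef⟩ : ∃ A : ℤ, lucasV P (-1) (2*m) = A := ⟨_, rfl⟩
  rw [hAdef] at hbig heq hA3
  obtain ⟨C, hCdef⟩ : ∃ C : ℤ, A + A ^ 2 - 3 = C := ⟨_, rfl⟩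
  have hC9 : 9 ≤ C := by nlinarith
  have hbig' : (n : ℤ) > C ^ 3 := by
    have h1 : |A| = A := abs_of_nonneg (by linarith)
    have h2 : |A ^ 2 - 3| = A ^ 2 - 3 := abs_of_nonneg (by nlinarith)
    rw [h1, h2] at hbig
    rw [← hCdef]
    convert hbig using 2
    ring
  have hn729 : (729 : ℤ) < (n : ℤ) := by
    have h0 : (9:ℤ)^3 ≤ C^3 := pow_le_pow_left₀ (by norm_num) hC9 3
    norm_num at h0
    linarith
  have hnbig : 729 < n := by exact_mod_cast hn729
  have hn1 : n ≠ 1 := by omega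
  -- n is not prime
  have hnp : ¬ n.Prime := by
    intro h
    rw [sigma2_prime n h] at heq
    push_cast at heq
    nlinarith
  -- smallest prime factor
  have hp : n.minFac.Prime := Nat.minFac_prime hn1
  obtain ⟨a, hna⟩ : n.minFac ∣ n := Nat.minFac_dvd n
  obtain ⟨p, hpdef⟩ : ∃ p : ℕ, n.minFac = p := ⟨_, rfl⟩
  rw [hpdef] at hp hna
  have had : a ∣ n := ⟨p, by rw [hna]; ring⟩
  have hapos : 0 < a := by
    rcases Nat.eq_zero_or_pos a with h | h
    · rw [h, mul_zero] at hna; omega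
    · exact h
  have ha1 : a ≠ 1 := by
    intro h
    rw [h, mul_one] at hna
    exact hnp (by rw [hna]; exact hp)
  have ha2 : 2 ≤ a := by omega
  have haln : a < n := by
    have h1 : 2 * a ≤ p * a := Nat.mul_le_mul_right a hp.two_le
    omega
  -- key size bound
  have hn1' : (1:ℤ) ≤ (n:ℤ) := by exact_mod_cast hn
  have hCn : A * n + A ^ 2 - 3 ≤ C * n := by
    have hexp : C * (n:ℤ) = A*(n:ℤ) + (A^2-3)*((n:ℤ)-1) + A^2 - 3 := by rw [← hCdef]; ring
    have hnn : (0:ℤ) ≤ (A^2-3)*((n:ℤ)-1) := mul_nonneg (by nlinarith) (by linarith)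
    linarith
  have hsig_lb : (n:ℤ)^2 + (a:ℤ)^2 + 1 ≤ ((ArithmeticFunction.sigma 2) n : ℤ) := by
    exact_mod_cast sigma2_lb n a hn had (by omega) haln
  have haC : (a:ℤ)^2 < C * n := by nlinarith
  -- a is prime
  have haprime : a.Prime := by
    by_contra hq
    have hr : a.minFac.Prime := Nat.minFac_prime ha1
    obtain ⟨b, hab⟩ : a.minFac ∣ a := Nat.minFac_dvd a
    obtain ⟨r, hrdef⟩ : ∃ r : ℕ, a.minFac = r := ⟨_, rfl⟩
    rw [hrdef] at hr hab
    have hrd : r ∣ a := ⟨b, hab⟩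
    have hbpos : 0 < b := by
      rcases Nat.eq_zero_or_pos b with h | h
      · rw [h, mul_zero] at hab; omega
      · exact h
    have hb1 : b ≠ 1 := by
      intro h
      rw [h, mul_one] at hab
      exact hq (by rw [hab]; exact hr)
    have hb2 : 2 ≤ b := by omega
    have hpr : p ≤ r := by
      rw [← hpdef]; exact Nat.minFac_le_of_dvd hr.two_le (hrd.trans had)
    have hbd : b ∣ a := ⟨r, by rw [hab]; ring⟩
    have hpb : p ≤ b := by
      rw [← hpdef]; exact Nat.minFac_le_of_dvd hb2 (hbd.trans had)
    have hp3 : p^3 ≤ n := by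
      calc p^3 = p * (p * p) := by ring
        _ ≤ p * (r * b) := Nat.mul_le_mul_left p (Nat.mul_le_mul hpr hpb)
        _ = n := by rw [← hab, ← hna]
    -- a < C * p
    have hp0 : (0:ℤ) < (p:ℤ) := by exact_mod_cast hp.pos
    have ha0 : (0:ℤ) < (a:ℤ) := by exact_mod_cast hapos
    have hnpa : (n:ℤ) = (p:ℤ) * (a:ℤ) := by exact_mod_cast hna
    have haCp : (a:ℤ) < C * (p:ℤ) := by
      have h1 : (a:ℤ) * (a:ℤ) < (C * (p:ℤ)) * (a:ℤ) := by
        calc (a:ℤ) * (a:ℤ) = (a:ℤ)^2 := by ring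
          _ < C * n := haC
          _ = (C * (p:ℤ)) * (a:ℤ) := by rw [hnpa]; ring
      exact lt_of_mul_lt_mul_right h1 (le_of_lt ha0)
    have hnCp2 : (n:ℤ) < C * (p:ℤ)^2 := by
      calc (n:ℤ) = (p:ℤ) * (a:ℤ) := hnpa
        _ < (p:ℤ) * (C * (p:ℤ)) := mul_lt_mul_of_pos_left haCp hp0
        _ = C * (p:ℤ)^2 := by ring
    have hp3' : (p:ℤ)^3 ≤ (n:ℤ) := by exact_mod_cast hp3
    have hpC : (p:ℤ) < C := by
      have h1 : (p:ℤ) * (p:ℤ)^2 < C * (p:ℤ)^2 := by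
        calc (p:ℤ) * (p:ℤ)^2 = (p:ℤ)^3 := by ring
          _ ≤ (n:ℤ) := hp3'
          _ < C * (p:ℤ)^2 := hnCp2
      exact lt_of_mul_lt_mul_right h1 (by positivity)
    have hsq : (p:ℤ)^2 < C^2 := by nlinarith
    have hC0 : (0:ℤ) < C := by linarith
    have hfin : C * (p:ℤ)^2 < C^3 := by
      calc C * (p:ℤ)^2 < C * C^2 := mul_lt_mul_of_pos_left hsq hC0
        _ = C^3 := by ring
    linarith
  -- now n = p * a with both prime, p ≤ a
  have hpa : p ≤ a := by
    rw [← hpdef]; exact Nat.minFac_le_of_dvd haprime.two_le had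
  have hp2' : (2:ℤ) ≤ (p:ℤ) := by exact_mod_cast hp.two_le
  have hpqne : p ≠ a := by
    intro h
    subst h
    have hnsq : n = p^2 := by rw [hna]; ring
    rw [hnsq, sigma2_prime_sq p hp] at heq
    push_cast at heq
    have h3p : 3 * ((p:ℤ)^2) ≤ A * ((p:ℤ)^2) :=
      mul_le_mul_of_nonneg_right hA3 (sq_nonneg _)
    nlinarith
  rw [hna, sigma2_prime_mul p a hp haprime hpqne] at heq
  push_cast at heq
  -- the key diophantine equation
  have hkey : (p:ℤ)^2 + (a:ℤ)^2 = A * ((p:ℤ) * (a:ℤ)) + A^2 - 4 := by linear_combination heq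
  -- Pell part
  have hpa' : (p:ℤ) < (a:ℤ) := by exact_mod_cast lt_of_le_of_ne hpa hpqne
  have hnorm2m0 := norm_eq P (2*m)
  rw [hAdef, Even.neg_one_pow ⟨m, by ring⟩] at hnorm2m0
  obtain ⟨Um, hUmdef⟩ : ∃ u:ℤ, lucasU P (-1) (2*m) = u := ⟨_, rfl⟩
  rw [hUmdef] at hnorm2m0
  have hnorm2m : A^2 - (P^2+4) * Um^2 = 4 := by linarith
  have hUm1 : (1:ℤ) ≤ Um := by rw [← hUmdef]; exact U_pos P hP (2*m) (by omega)
  have hX : (2*(p:ℤ) - A*(a:ℤ))^2 = (Um^2) * ((P^2+4) * ((a:ℤ)^2+4)) := by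
    linear_combination 4*hkey + ((a:ℤ)^2+4)*hnorm2m
  have hdvd : Um ∣ (2*(p:ℤ) - A*(a:ℤ)) :=
    (Int.pow_dvd_pow_iff two_ne_zero).mp ⟨(P^2+4) * ((a:ℤ)^2+4), hX⟩
  obtain ⟨W, hW⟩ := hdvd
  have hWsq : W^2 = (P^2+4) * ((a:ℤ)^2+4) := by
    have h1 : Um^2 * W^2 = Um^2 * ((P^2+4)*((a:ℤ)^2+4)) := by
      rw [← mul_pow, ← hW]; exact hX
    exact mul_left_cancel₀ (pow_ne_zero 2 (by linarith)) h1
  have hDW : (P^2+4) ∣ W := hsf.isRadical 2 W ⟨(a:ℤ)^2+4, hWsq⟩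
  obtain ⟨w, hw⟩ := hDW
  have hD0 : (0:ℤ) < P^2+4 := by positivity
  have haw : (a:ℤ)^2 - (P^2+4)*w^2 = -4 := by
    have h1 : (P^2+4) * ((P^2+4)*w^2) = (P^2+4) * ((a:ℤ)^2+4) := by
      rw [← hWsq, hw]; ring
    have h2 := mul_left_cancel₀ (ne_of_gt hD0) h1
    linarith
  have ha0' : (0:ℤ) < (a:ℤ) := by exact_mod_cast hapos
  obtain ⟨j, hjV, hjU⟩ := pell_solve P hP (|w|.toNat) (a:ℤ) |w| ha0' (abs_nonneg w)
    (by rw [Int.toNat_of_nonneg (abs_nonneg w)]) (Or.inr (by rw [sq_abs]; exact haw))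
  have hjodd : Odd j := by
    rcases Nat.even_or_odd j with h | h
    · exfalso
      have hnj := norm_eq P j
      rw [← hjV, ← hjU, Even.neg_one_pow h, sq_abs] at hnj
      linarith
    · exact h
  have hj1 : 1 ≤ j := by rcases hjodd with ⟨c, hc⟩; omega
  have hXw : 2*(p:ℤ) - A*(a:ℤ) = Um * ((P^2+4) * w) := by rw [hW, hw]
  have hUj : lucasU P (-1) j = |w| := hjU.symm
  rcases abs_choice w with habs | habs
  · -- w = U j : leads to p = V (2m+j) > a, contradiction
    exfalso
    have hadd := add_V P (2*m) j
    rw [hAdef, hUmdef, ← hjV, hUj, habs] at hadd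
    have h2 : 2*(p:ℤ) = 2 * lucasV P (-1) (2*m+j) := by linear_combination hXw - hadd
    have hlt := V_lt_V P hP j (2*m+j) hj1 (by omega)
    rw [← hjV] at hlt
    linarith
  · -- w = -U j
    have hj2m : j ≠ 2*m := by rcases hjodd with ⟨c, hc⟩; omega
    rcases Nat.lt_or_ge j (2*m) with hlt | hge
    · exfalso
      have hsub := sub_V P (2*m - j) j
      have hidx : 2*m - j + j = 2*m := by omega
      rw [hidx, hAdef, hUmdef, ← hjV, hUj, habs, Odd.neg_one_pow hjodd] at hsub
      have hVpos := V_pos P hP (2*m - j)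
      have h2 : 2*(p:ℤ) = -2 * lucasV P (-1) (2*m - j) := by linear_combination hXw + hsub
      linarith
    · have hgt : 2*m < j := by omega
      have hsub := sub_V P (j - 2*m) (2*m)
      have hidx : j - 2*m + 2*m = j := by omega
      rw [hidx, hAdef, hUmdef, ← hjV, hUj, habs, Even.neg_one_pow ⟨m, by ring⟩] at hsub
      have h2 : 2*(p:ℤ) = 2 * lucasV P (-1) (j - 2*m) := by linear_combination hXw + hsub
      have hpV : (p:ℤ) = lucasV P (-1) (j - 2*m) := by linarith
      obtain ⟨c, hc⟩ := hjodd
      have hk1 : 2*((j - 2*m - 1)/2)+1 = j - 2*m := by omega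
      have hk2 : 2*((j - 2*m - 1)/2)+2*m+1 = j := by omega
      refine ⟨(j - 2*m - 1)/2, ?_, ?_, ?_⟩
      · rw [hk1, hk2, ← hjV, ← hpV]
        rw [hna]; push_cast; ring
      · rw [hk1, ← hpV]
        exact Int.prime_iff_natAbs_prime.mpr (by simpa using hp)
      · rw [hk2, ← hjV]
        exact Int.prime_iff_natAbs_prime.mpr (by simpa using haprime)


lemma lucasV_negP (P : ℤ) : ∀ n : ℕ, lucasV (-P) (-1) n = (-1)^n * lucasV P (-1) n := by
  intro n
  induction n using Nat.strong_induction_on with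
  | _ n ih =>
    match n with
    | 0 => simp [lucasV]
    | 1 => simp [lucasV]
    | (k+2) =>
      have h1 := ih k (by omega)
      have h2 := ih (k+1) (by omega)
      rw [Vrec, Vrec, h1, h2]
      ring

theorem stmt_8 (P : ℤ) (hsf : Squarefree (P ^ 2 + 4)) (m : ℕ) (hm : 1 ≤ m)
    (n : ℕ) (hn : 0 < n)
    (hbig : (n : ℤ) > (|lucasV P (-1) (2 * m)| + |lucasV P (-1) (2 * m) ^ 2 - 3|) ^ 3)
    (heq : ((ArithmeticFunction.sigma 2) n : ℤ) - (n : ℤ) ^ 2 =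
      lucasV P (-1) (2 * m) * n + lucasV P (-1) (2 * m) ^ 2 - 3) :
    (∃ k : ℕ,
      (n : ℤ) = lucasV P (-1) (2 * k + 1) * lucasV P (-1) (2 * k + 2 * m + 1) ∧
      Prime (lucasV P (-1) (2 * k + 1)) ∧ Prime (lucasV P (-1) (2 * k + 2 * m + 1))) ∨
    (∃ k : ℕ, k < m ∧ m ≠ 2 * k + 1 ∧
      (n : ℤ) = lucasV P (-1) (2 * k + 1) * lucasV P (-1) (2 * m - (2 * k + 1)) ∧
      Prime (lucasV P (-1) (2 * k + 1)) ∧ Prime (lucasV P (-1) (2 * m - (2 * k + 1)))) := by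
  left
  rcases lt_trichotomy P 0 with hPneg | hP0 | hPpos
  · -- P ≤ -1 : reduce to -P
    have hP' : 1 ≤ -P := by omega
    have hVeq : ∀ j : ℕ, lucasV P (-1) j = (-1)^j * lucasV (-P) (-1) j := by
      intro j
      have h := lucasV_negP (-P) j
      rw [neg_neg] at h
      exact h
    have hV2m : lucasV P (-1) (2*m) = lucasV (-P) (-1) (2*m) := by
      rw [hVeq, Even.neg_one_pow ⟨m, by ring⟩, one_mul]
    have hsf' : Squarefree ((-P) ^ 2 + 4) := by rwa [neg_pow, Even.neg_one_pow ⟨1, by ring⟩, one_mul]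
    rw [hV2m] at hbig heq
    obtain ⟨k, hk1, hk2, hk3⟩ := main_pos (-P) hP' hsf' m hm n hn hbig heq
    have ho1 : Odd (2*k+1) := ⟨k, by ring⟩
    have ho2 : Odd (2*k+2*m+1) := ⟨k+m, by ring⟩
    refine ⟨k, ?_, ?_, ?_⟩
    · rw [hVeq (2*k+1), hVeq (2*k+2*m+1), Odd.neg_one_pow ho1, Odd.neg_one_pow ho2, hk1]
      ring
    · rw [hVeq (2*k+1), Odd.neg_one_pow ho1, neg_one_mul]
      exact hk2.neg
    · rw [hVeq (2*k+2*m+1), Odd.neg_one_pow ho2, neg_one_mul]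
      exact hk3.neg
  · exfalso
    subst hP0
    norm_num at hsf
    have h4 : ((2:ℤ) * 2) ∣ 4 := ⟨1, by norm_num⟩
    have := hsf 2 h4
    rw [Int.isUnit_iff] at this
    omega
  · exact main_pos P (by omega) hsf m hm n hn hbig heq
end
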